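/- arXiv:1607.00472 — 2 statements merged into one kernel-verified Lean document; each statement's English description precedes it below -/
import Mathlib

section
/- A simple connected graph G of order n ≥ 2 satisfies b•(G) = 0 (i.e., G admits an energy orientation with no black arcs) if and only if G contains no cycle of odd length. -/
/-- `D` is an orientation of the simple graph `G`: each edge of `G` receives exactly one
direction, and the arcs of `D` are exactly the directed edges of `G`. -/
def IsOrientation {V : Type*} (G : SimpleGraph V) (D : V → V → Prop) : Prop :=
  (∀ u v, D u v → G.Adj u v) ∧
  (∀ u v, G.Adj u v → (D u v ∨ D v u)) ∧
  (∀ u v, D u v → ¬ D v u)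

/-- An energy orientation of `G` is an orientation whose resulting digraph is acyclic,
i.e. contains no directed cycle. -/
def IsEnergyOrientation {V : Type*} (G : SimpleGraph V) (D : V → V → Prop) : Prop :=
  IsOrientation G D ∧ ∀ v, ¬ Relation.TransGen D v v

/-- A source of the digraph `D` is a vertex of in-degree `0`. -/
def IsSource {V : Type*} (D : V → V → Prop) (s : V) : Prop :=
  ∀ u, ¬ D u s

/-- `StepsTo D k u v` means there is a directed walk of length `k` from `u` to `v` in `D`. -/
def StepsTo {V : Type*} (D : V → V → Prop) : ℕ → V → V → Prop
  | 0, u, v => u = v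
  | k + 1, u, v => ∃ w, D u w ∧ StepsTo D k w v

/-- `edist D v` is the minimum, over all sources `s` of `D`, of the length of a shortest
directed path from `s` to `v`. -/
noncomputable def edist {V : Type*} (D : V → V → Prop) (v : V) : ℕ :=
  sInf {k : ℕ | ∃ s, IsSource D s ∧ StepsTo D k s v}

/-- An arc `(u, v)` of `D` is a black arc if it lies on no shortest directed path from a source
to `v`, equivalently if `edist D v ≠ edist D u + 1`. -/
def IsBlackArc {V : Type*} (D : V → V → Prop) (u v : V) : Prop :=
  D u v ∧ edist D v ≠ edist D u + 1

/-- The number of black arcs of the digraph `D`. -/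
noncomputable def blackArcCount {V : Type*} (D : V → V → Prop) : ℕ :=
  Set.ncard {p : V × V | IsBlackArc D p.1 p.2}

/-- The black arc number `b•(G)`: the minimum number of black arcs over all energy
orientations of `G`. -/
noncomputable def blackArcNumber {V : Type*} (G : SimpleGraph V) : ℕ :=
  sInf {k : ℕ | ∃ D : V → V → Prop, IsEnergyOrientation G D ∧ blackArcCount D = k}

/-!
Without black arcs `edist` increases by exactly one along every arc, so its parity is a proper
2-colouring of `G`. Conversely, orienting every edge of a 2-colouring from the first colour class
to the second makes the first class consist of sources (level 0) and puts every head of an arc at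
level 1, so no arc is black. Finally, `G` is 2-colourable iff it has no odd cycle, since an odd
closed walk always contains an odd cycle.
-/

namespace SimpleGraph

variable {V : Type*} {G : SimpleGraph V}

theorem Walk.exists_isCycle_odd_length {v : V} (p : G.Walk v v) (hp : Odd p.length) :
    ∃ (u : V) (c : G.Walk u u), c.IsCycle ∧ Odd c.length := by
  induction hn : p.length using Nat.strong_induction_on generalizing v with
  | _ n ih =>
  cases p with
  | nil => simp at hp
  | cons h q =>
    by_cases hq : q.IsPath
    · have hq0 : q.length ≠ 0 := fun h0 => h.ne (q.eq_of_length_eq_zero h0).symm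
      refine ⟨v, _, Walk.isCycle_iff_isPath_tail_and_le_length.mpr ⟨by simpa using hq, ?_⟩, hp⟩
      rw [Walk.length_cons] at hp ⊢
      rcases hp with ⟨k, hk⟩
      omega
    -- Cutting a nontrivial closed subwalk `w` out of `p` leaves two shorter closed walks whose
    -- lengths add up to the odd length of `p`.
    · obtain ⟨x, w, ⟨r₁, r₂, rfl⟩, hw⟩ : ∃ (x : V) (w : G.Walk x x), w.IsSubwalk q ∧ ¬ w.Nil := by
        simpa [Walk.isPath_iff_isSubwalk_imp_nil] using hq
      have hw0 : w.length ≠ 0 := fun h0 => hw (Walk.length_eq_zero_iff.mp h0)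
      have hlen : (Walk.cons h (r₁.append r₂)).length + w.length = n := by
        simp only [← hn, Walk.length_cons, Walk.length_append]; omega
      rcases Nat.even_or_odd w.length with hwe | hwo
      · refine ih _ (by omega) (Walk.cons h (r₁.append r₂)) ?_ rfl
        rw [hn, ← hlen] at hp
        exact (Nat.odd_add.mp hp).mpr hwe
      · exact ih _ (by simp only [Walk.length_cons] at hlen; omega) w hwo rfl

theorem colorable_two_iff_forall_isCycle_not_odd :
    G.Colorable 2 ↔ ∀ (v : V) (c : G.Walk v v), c.IsCycle → ¬ Odd c.length := by
  rw [two_colorable_iff_forall_loop_even]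
  refine ⟨fun h v c _ hodd => Nat.not_odd_iff_even.mpr (h v c) hodd, fun h v p => ?_⟩
  by_contra hp
  obtain ⟨u, c, hc, hodd⟩ := p.exists_isCycle_odd_length (Nat.not_even_iff_odd.mp hp)
  exact h u c hc hodd

end SimpleGraph

section Orientation

variable {V : Type*} {G : SimpleGraph V} {D : V → V → Prop}

theorem isEnergyOrientation_adj_lt [LinearOrder V] (G : SimpleGraph V) :
    IsEnergyOrientation G (fun u v => G.Adj u v ∧ u < v) := by
  refine ⟨⟨fun _ _ h => h.1, fun u v h => ?_, fun _ _ h h' => h.2.not_gt h'.2⟩, fun v hv => ?_⟩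
  · rcases h.ne.lt_or_gt with huv | hvu
    · exact Or.inl ⟨h, huv⟩
    · exact Or.inr ⟨h.symm, hvu⟩
  · exact lt_irrefl v (Relation.transGen_minimal (fun _ _ h => h.2) _ _ hv)

theorem exists_isEnergyOrientation (G : SimpleGraph V) : ∃ D, IsEnergyOrientation G D := by
  let := IsWellOrder.linearOrder (WellOrderingRel (α := V))
  exact ⟨_, isEnergyOrientation_adj_lt G⟩

theorem blackArcNumber_eq_zero_iff (G : SimpleGraph V) :
    blackArcNumber G = 0 ↔ ∃ D, IsEnergyOrientation G D ∧ blackArcCount D = 0 := by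
  refine Nat.sInf_eq_zero.trans ⟨?_, Or.inl⟩
  rintro (h0 | hempty)
  · exact h0
  · obtain ⟨D, hD⟩ := exists_isEnergyOrientation G
    exact absurd hempty (Set.nonempty_iff_ne_empty.mp ⟨_, D, hD, rfl⟩)

theorem blackArcCount_eq_zero_iff [Finite V] :
    blackArcCount D = 0 ↔ ∀ u v, D u v → edist D v = edist D u + 1 := by
  rw [blackArcCount, Set.ncard_eq_zero (Set.toFinite _), Set.eq_empty_iff_forall_notMem]
  simp [IsBlackArc]

theorem edist_eq_zero_of_isSource {s : V} (hs : IsSource D s) : edist D s = 0 :=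
  Nat.sInf_eq_zero.mpr (Or.inl ⟨s, hs, rfl⟩)

theorem edist_eq_one_of_isSource {u v : V} (hu : IsSource D u) (huv : D u v) : edist D v = 1 := by
  have h1 : 1 ∈ {k | ∃ s, IsSource D s ∧ StepsTo D k s v} := ⟨u, hu, v, huv, rfl⟩
  refine le_antisymm (Nat.sInf_le h1) (Nat.one_le_iff_ne_zero.mpr fun h0 => ?_)
  obtain ⟨s, hs, rfl⟩ : 0 ∈ {k | ∃ s, IsSource D s ∧ StepsTo D k s v} := h0 ▸ Nat.sInf_mem ⟨1, h1⟩
  exact hs u huv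

noncomputable def edistParityColoring (hD : IsOrientation G D)
    (hb : ∀ u v, D u v → edist D v = edist D u + 1) : G.Coloring Bool :=
  SimpleGraph.Coloring.mk (fun v => decide (Even (edist D v))) fun {u v} huv => by
    rcases hD.2.1 u v huv with h | h <;> simp [hb _ _ h, Nat.even_add_one, -Nat.not_even_iff_odd]

theorem colorable_two_of_blackArcCount_eq_zero [Finite V] (hD : IsOrientation G D)
    (h0 : blackArcCount D = 0) : G.Colorable 2 := by
  simpa using (edistParityColoring hD (blackArcCount_eq_zero_iff.mp h0)).colorable

def bicoloringOrientation (c : G.Coloring Bool) (u v : V) : Prop :=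
  G.Adj u v ∧ c u = false

variable (c : G.Coloring Bool)

theorem isSource_bicoloringOrientation {v : V} (hv : c v = false) :
    IsSource (bicoloringOrientation c) v :=
  fun _ huv => c.valid huv.1 (huv.2.trans hv.symm)

theorem bicoloringOrientation_target {u v : V} (h : bicoloringOrientation c u v) : c v = true := by
  have := c.valid h.1
  cases hv : c v <;> simp_all [bicoloringOrientation]

theorem isEnergyOrientation_bicoloringOrientation :
    IsEnergyOrientation G (bicoloringOrientation c) := by
  refine ⟨⟨fun _ _ h => h.1, fun u v h => ?_, fun u v h h' => ?_⟩, fun v hv => ?_⟩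
  · cases hu : c u
    · exact Or.inl ⟨h, hu⟩
    · exact Or.inr ⟨h.symm, by simpa [hu] using (c.valid h).symm⟩
  · simpa [bicoloringOrientation_target c h] using h'.2
  · obtain ⟨_, hout, _⟩ := Relation.TransGen.head'_iff.mp hv
    obtain ⟨_, _, hin⟩ := Relation.TransGen.tail'_iff.mp hv
    simpa [bicoloringOrientation_target c hin] using hout.2

theorem blackArcCount_bicoloringOrientation [Finite V] :
    blackArcCount (bicoloringOrientation c) = 0 :=
  blackArcCount_eq_zero_iff.mpr fun _ _ h => by
    rw [edist_eq_one_of_isSource (isSource_bicoloringOrientation c h.2) h,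
      edist_eq_zero_of_isSource (isSource_bicoloringOrientation c h.2)]

end Orientation

theorem exists_isEnergyOrientation_blackArcCount_eq_zero_iff {V : Type*} [Finite V]
    {G : SimpleGraph V} :
    (∃ D, IsEnergyOrientation G D ∧ blackArcCount D = 0) ↔ G.Colorable 2 := by
  refine ⟨fun ⟨D, hD, h0⟩ => colorable_two_of_blackArcCount_eq_zero hD.1 h0, fun ⟨c⟩ => ?_⟩
  let c' := G.recolorOfEquiv finTwoEquiv c
  exact ⟨_, isEnergyOrientation_bicoloringOrientation c', blackArcCount_bicoloringOrientation c'⟩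

theorem blackArcNumber_eq_zero_iff_no_odd_cycle_general {V : Type*} [Fintype V] (G : SimpleGraph V) :
    (blackArcNumber G = 0 ↔ ∀ (v : V) (c : G.Walk v v), c.IsCycle → ¬ Odd c.length) ∧
    ((∃ D : V → V → Prop, IsEnergyOrientation G D ∧ blackArcCount D = 0) ↔
      ∀ (v : V) (c : G.Walk v v), c.IsCycle → ¬ Odd c.length) := by
  have key := exists_isEnergyOrientation_blackArcCount_eq_zero_iff.trans
    G.colorable_two_iff_forall_isCycle_not_odd
  exact ⟨(blackArcNumber_eq_zero_iff G).trans key, key⟩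

/-- A simple connected graph `G` of order `n ≥ 2` satisfies `b•(G) = 0`
(equivalently, admits an energy orientation with no black arcs) if and only if `G` contains no
cycle of odd length. -/
theorem blackArcNumber_eq_zero_iff_no_odd_cycle {V : Type*} [Fintype V] (G : SimpleGraph V)
    (h2 : 2 ≤ Fintype.card V) (hconn : G.Connected) :
    (blackArcNumber G = 0 ↔ ∀ (v : V) (c : G.Walk v v), c.IsCycle → ¬ Odd c.length) ∧
    ((∃ D : V → V → Prop, IsEnergyOrientation G D ∧ blackArcCount D = 0) ↔
      ∀ (v : V) (c : G.Walk v v), c.IsCycle → ¬ Odd c.length) :=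
  blackArcNumber_eq_zero_iff_no_odd_cycle_general G
end

section
/- Let a_i = i mod 3. For every n ≥ 1, in the finite Jaco-type graph J_n((a_i)) every vertex j with 2 ≤ j ≤ n has in-degree exactly 1, and the underlying undirected graph of J_n((a_i)) is connected and contains no cycle, i.e., it is a directed tree. Consequently no vertex of J_n((a_i)) has two adjacent out-neighbours, so the Jaco-type Black Arc Algorithm outputs no black arcs and b•(J_n((a_i))) = 0. -/
/-- The arc relation of the finite Jaco-type graph `J_n((a_i))`: the vertices are
`1, 2, …, n ∈ ℕ` and `(i, j)` is an arc iff `1 ≤ i < j ≤ n` and `j ≤ i + a_i`. -/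
def JacoArc (a : ℕ → ℕ) (n i j : ℕ) : Prop :=
  1 ≤ i ∧ i < j ∧ j ≤ n ∧ j ≤ i + a i

/-- The arc set of the finite Jaco-type graph `J_n((a_i))`, as a set of ordered pairs. -/
def jacoArcSet (a : ℕ → ℕ) (n : ℕ) : Set (ℕ × ℕ) :=
  {p : ℕ × ℕ | JacoArc a n p.1 p.2}

/-- Given an arc set `A`, `blackAt i A` is the set of arcs of `A` both of whose endpoints are
out-neighbours of vertex `i` in `A` (the arcs of the subgraph induced by the
out-neighbourhood of `i`). -/
def blackAt (i : ℕ) (A : Set (ℕ × ℕ)) : Set (ℕ × ℕ) :=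
  {p ∈ A | (i, p.1) ∈ A ∧ (i, p.2) ∈ A}

/-- The Jaco-type Black Arc Algorithm: `algG A m` is the arc set `G_{m+1}` obtained from
`G_1 = A` by deleting, for `i = 1, …, m`, the arc set `B_i = blackAt i G_i` at step `i`. -/
def algG (A : Set (ℕ × ℕ)) : ℕ → Set (ℕ × ℕ)
  | 0 => A
  | m + 1 => algG A m \ blackAt (m + 1) (algG A m)

/-- The set of black arcs output by the Jaco-type Black Arc Algorithm on an arc set `A` with
`n` vertices: `B = B_1 ∪ ⋯ ∪ B_{n−1}` where `B_i = blackAt i G_i` and `G_i = algG A (i−1)`. -/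
def blackSet (A : Set (ℕ × ℕ)) (n : ℕ) : Set (ℕ × ℕ) :=
  ⋃ i ∈ Finset.Icc 1 (n - 1), blackAt i (algG A (i - 1))

/-- The underlying simple undirected graph of the finite Jaco-type graph `J_n((a_i))`, on the
vertex set `{1, …, n}` modelled as `Fin n` (vertex `v : Fin n` stands for the label `v + 1`). -/
def jacoUnderlying (a : ℕ → ℕ) (n : ℕ) : SimpleGraph (Fin n) :=
  SimpleGraph.fromRel (fun u v => JacoArc a n (u.val + 1) (v.val + 1))

/-!
In `J_n((i mod 3))` vertex `i` has out-neighbours `i + 1, …, i + (i mod 3)`, so every `j ≥ 2` has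
exactly one in-neighbour, its parent `j - 2` if `j ≡ 1 (mod 3)` and `j - 1` otherwise. Hence in the
underlying graph every vertex but `1` has exactly one smaller neighbour: following parents reaches
`1`, and the largest vertex of a cycle would have two smaller neighbours. Two out-neighbours of `i`
both have parent `i`, so neither is the parent of the other and no arc is ever black.
-/

namespace SimpleGraph

variable {α : Type*} [LinearOrder α] (G : SimpleGraph α)

theorem isAcyclic_of_lt_adj_unique
    (h : ∀ ⦃u w v⦄, u < v → w < v → G.Adj u v → G.Adj w v → u = w) : G.IsAcyclic := by
  intro v c hc
  obtain ⟨m, hm, hmax⟩ := c.support.toFinset.exists_max_image id ⟨v, by simp⟩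
  rw [List.mem_toFinset] at hm
  have hc' : (c.rotate m hm).IsCycle := hc.rotate hm
  have lt_of_adj : ∀ x ∈ (c.rotate m hm).support, G.Adj x m → x < m := fun x hx hadj =>
    (hmax x (by simpa using hx)).lt_of_ne hadj.ne
  exact hc'.snd_ne_penultimate <| h
    (lt_of_adj _ (Walk.getVert_mem_support _ _) (Walk.adj_snd hc'.not_nil).symm)
    (lt_of_adj _ (Walk.getVert_mem_support _ _) (Walk.adj_penultimate hc'.not_nil))
    (Walk.adj_snd hc'.not_nil).symm (Walk.adj_penultimate hc'.not_nil)

theorem connected_of_exists_lt_adj [OrderBot α] [WellFoundedLT α]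
    (h : ∀ v, v ≠ ⊥ → ∃ u < v, G.Adj u v) : G.Connected := by
  have reachable_bot : ∀ v, G.Reachable ⊥ v := fun v => by
    induction v using WellFoundedLT.induction with
    | _ v ih =>
      rcases eq_or_ne v ⊥ with rfl | hv
      · rfl
      · obtain ⟨u, huv, hadj⟩ := h v hv
        exact (ih u huv).trans hadj.reachable
  exact ⟨fun u v => (reachable_bot u).symm.trans (reachable_bot v)⟩

end SimpleGraph

theorem algG_subset (A : Set (ℕ × ℕ)) (m : ℕ) : algG A m ⊆ A := by
  induction m with
  | zero => exact subset_rfl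
  | succ m ih => exact Set.sdiff_subset.trans ih

theorem blackSet_eq_empty {A : Set (ℕ × ℕ)}
    (hA : ∀ i u v, (i, u) ∈ A → (i, v) ∈ A → (u, v) ∉ A) (n : ℕ) : blackSet A n = ∅ := by
  refine Set.eq_empty_of_forall_notMem fun p hp => ?_
  simp only [blackSet, Set.mem_iUnion] at hp
  obtain ⟨i, -, hp, hu, hv⟩ := hp
  exact hA i p.1 p.2 (algG_subset A _ hu) (algG_subset A _ hv) (algG_subset A _ hp)

def mod3Parent (j : ℕ) : ℕ := if j % 3 = 1 then j - 2 else j - 1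

theorem mod3Parent_lt {j : ℕ} (h : 1 ≤ j) : mod3Parent j < j := by
  unfold mod3Parent; split_ifs <;> omega

theorem one_le_mod3Parent {j : ℕ} (h : 2 ≤ j) : 1 ≤ mod3Parent j := by
  unfold mod3Parent; split_ifs <;> omega

theorem jacoArc_mod3_iff {n i j : ℕ} :
    JacoArc (fun i => i % 3) n i j ↔ 2 ≤ j ∧ j ≤ n ∧ i = mod3Parent j := by
  show 1 ≤ i ∧ i < j ∧ j ≤ n ∧ j ≤ i + i % 3 ↔ _
  unfold mod3Parent
  split_ifs <;> omega

theorem setOf_jacoArc_mod3 {n j : ℕ} (h2 : 2 ≤ j) (hj : j ≤ n) :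
    {i | JacoArc (fun i => i % 3) n i j} = {mod3Parent j} := by
  ext i
  simp [jacoArc_mod3_iff, h2, hj]

theorem not_jacoArc_mod3_of_jacoArc {n i u v : ℕ} (hu : JacoArc (fun i => i % 3) n i u)
    (hv : JacoArc (fun i => i % 3) n i v) : ¬ JacoArc (fun i => i % 3) n u v := by
  rw [jacoArc_mod3_iff] at hu hv ⊢
  have := mod3Parent_lt (j := u) (by omega)
  omega

theorem jacoUnderlying_mod3_adj_of_lt {n : ℕ} {u v : Fin n} (h : u < v) :
    (jacoUnderlying (fun i => i % 3) n).Adj u v ↔ u.val + 1 = mod3Parent (v.val + 1) := by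
  have := mod3Parent_lt (j := u.val + 1) (by omega)
  rw [jacoUnderlying, SimpleGraph.fromRel_adj, jacoArc_mod3_iff, jacoArc_mod3_iff]
  omega

theorem jacoUnderlying_mod3_isAcyclic (n : ℕ) : (jacoUnderlying (fun i => i % 3) n).IsAcyclic := by
  refine SimpleGraph.isAcyclic_of_lt_adj_unique _ fun u w v hu hw hau haw => Fin.ext ?_
  rw [jacoUnderlying_mod3_adj_of_lt hu] at hau
  rw [jacoUnderlying_mod3_adj_of_lt hw] at haw
  omega

theorem jacoUnderlying_mod3_connected (n : ℕ) [NeZero n] :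
    (jacoUnderlying (fun i => i % 3) n).Connected := by
  refine SimpleGraph.connected_of_exists_lt_adj _ fun v hv => ?_
  have hv : 0 < v.val := Fin.pos_iff_ne_zero.2 (by rwa [← bot_eq_zero])
  have := mod3Parent_lt (j := v.val + 1) (by omega)
  have := one_le_mod3Parent (j := v.val + 1) (by omega)
  have hlt : (⟨mod3Parent (v.val + 1) - 1, by omega⟩ : Fin n) < v := Fin.mk_lt_of_lt_val (by omega)
  exact ⟨_, hlt, (jacoUnderlying_mod3_adj_of_lt hlt).2 (by dsimp only; omega)⟩

/-- Let `a_i = i mod 3`.  For every `n ≥ 1`, in the finite Jaco-type graph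
`J_n((a_i))` every vertex `j` with `2 ≤ j ≤ n` has in-degree exactly `1`, and the underlying
undirected graph is connected and contains no cycle (it is a directed tree).  Consequently no
vertex has two adjacent out-neighbours, so the Jaco-type Black Arc Algorithm outputs no black
arcs and `b•(J_n((a_i))) = 0`. -/
theorem mod3_jaco_is_tree (n : ℕ) (hn : 1 ≤ n) :
    (∀ j : ℕ, 2 ≤ j → j ≤ n →
      Set.ncard {i : ℕ | JacoArc (fun i => i % 3) n i j} = 1) ∧
    (jacoUnderlying (fun i => i % 3) n).Connected ∧
    (jacoUnderlying (fun i => i % 3) n).IsAcyclic ∧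
    (∀ i u v : ℕ, JacoArc (fun i => i % 3) n i u → JacoArc (fun i => i % 3) n i v →
      ¬ JacoArc (fun i => i % 3) n u v) ∧
    blackSet (jacoArcSet (fun i => i % 3) n) n = ∅ ∧
    Set.ncard (blackSet (jacoArcSet (fun i => i % 3) n) n) = 0 := by
  have : NeZero n := ⟨by omega⟩
  have hblack : blackSet (jacoArcSet (fun i => i % 3) n) n = ∅ :=
    blackSet_eq_empty (fun _ _ _ => not_jacoArc_mod3_of_jacoArc) n
  refine ⟨fun j h2 hj => ?_, jacoUnderlying_mod3_connected n, jacoUnderlying_mod3_isAcyclic n,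
    fun _ _ _ => not_jacoArc_mod3_of_jacoArc, hblack, by rw [hblack, Set.ncard_empty]⟩
  rw [setOf_jacoArc_mod3 h2 hj, Set.ncard_singleton]
end
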